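/- arXiv:0907.2578 — 2 statements merged into one kernel-verified Lean document; each statement's English description precedes it below -/
import Mathlib

section
/- Let p be a prime with p ≠ 3 and N an integer with p ≤ N. If v_p(H_N) > 0, then N ≥ 3p. -/
/-!
Split `H_N` into the terms `1/i` with `p ∣ i`, which add up to `H_{⌊N/p⌋} / p`, and the
remaining terms, each a `p`-adic unit. If `v_p(H_{⌊N/p⌋}) ≤ 0`, the first part has strictly
negative valuation and therefore dominates: `v_p(H_N) = v_p(H_{⌊N/p⌋}) - 1 < 0`.
For `p ≤ N < 3p` we have `⌊N/p⌋ ∈ {1, 2}`, and `H_1 = 1`, `H_2 = 3/2` have nonpositive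
`p`-adic valuation as long as `p ≠ 3`.
-/

/-- The `n`-th harmonic number `H_n = ∑_{i=1}^n 1/i`, as a rational number. -/
def H (n : ℕ) : ℚ := ∑ i ∈ Finset.range n, (1 : ℚ) / (i + 1)

open Finset

theorem H_eq_harmonic : H = harmonic := by
  funext n
  simp [H, harmonic]

namespace padicValRat

variable {p : ℕ} [Fact p.Prime]

theorem sum_nonneg_of_nonneg {ι : Type*} {s : Finset ι} {F : ι → ℚ}
    (hF : ∀ i ∈ s, 0 ≤ padicValRat p (F i)) (hs : ∑ i ∈ s, F i ≠ 0) :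
    0 ≤ padicValRat p (∑ i ∈ s, F i) := by
  classical
  induction s using Finset.induction_on with
  | empty => simp at hs
  | insert a s ha ih =>
    rw [sum_insert ha] at hs ⊢
    by_cases hs0 : ∑ i ∈ s, F i = 0
    · simpa [hs0] using hF a (mem_insert_self a s)
    · exact (le_min (hF a (mem_insert_self a s))
        (ih (fun i hi => hF i (mem_insert_of_mem hi)) hs0)).trans (min_le_padicValRat_add hs)

theorem inv_natCast_of_not_dvd {i : ℕ} (h : ¬p ∣ i) : padicValRat p (i : ℚ)⁻¹ = 0 := by
  simp [padicValRat.inv, padicValNat.eq_zero_of_not_dvd h]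

theorem inv_self_mul {q : ℚ} (hq : q ≠ 0) :
    padicValRat p ((p : ℚ)⁻¹ * q) = padicValRat p q - 1 := by
  have hp : p.Prime := Fact.out
  rw [padicValRat.mul (inv_ne_zero (Nat.cast_ne_zero.mpr hp.ne_zero)) hq, padicValRat.inv,
    padicValRat.self hp.one_lt]
  ring

end padicValRat

theorem filter_dvd_Icc_eq_image (p N : ℕ) (hp : 0 < p) :
    {i ∈ Icc 1 N | p ∣ i} = (Icc 1 (N / p)).image (p * ·) := by
  ext i
  simp only [mem_filter, mem_Icc, mem_image]
  constructor
  · rintro ⟨⟨hi, hiN⟩, j, rfl⟩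
    refine ⟨j, ⟨Nat.pos_of_mul_pos_left hi, (Nat.le_div_iff_mul_le hp).mpr ?_⟩, rfl⟩
    linarith
  · rintro ⟨j, ⟨hj, hjN⟩, rfl⟩
    exact ⟨⟨Nat.mul_pos hp hj, by nlinarith [Nat.div_mul_le_self N p]⟩, dvd_mul_right p j⟩

theorem harmonic_eq_inv_mul_harmonic_div_add (p N : ℕ) (hp : 0 < p) :
    harmonic N = (p : ℚ)⁻¹ * harmonic (N / p) + ∑ i ∈ Icc 1 N with ¬p ∣ i, (i : ℚ)⁻¹ := by
  have hmul : ∑ i ∈ Icc 1 N with p ∣ i, (i : ℚ)⁻¹ = (p : ℚ)⁻¹ * harmonic (N / p) := by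
    rw [filter_dvd_Icc_eq_image p N hp,
      sum_image (fun a _ b _ h => Nat.eq_of_mul_eq_mul_left hp h), harmonic_eq_sum_Icc, mul_sum]
    simp [mul_comm]
  rw [← hmul, harmonic_eq_sum_Icc, sum_filter_add_sum_filter_not]

theorem padicValRat_harmonic_eq_sub_one {p N : ℕ} [Fact p.Prime] (hpN : p ≤ N)
    (h : padicValRat p (harmonic (N / p)) ≤ 0) :
    padicValRat p (harmonic N) = padicValRat p (harmonic (N / p)) - 1 := by
  have hp : 0 < p := (Fact.out : p.Prime).pos
  have hk : harmonic (N / p) ≠ 0 := (harmonic_pos (Nat.div_pos hpN hp).ne').ne'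
  have hN : harmonic N ≠ 0 := (harmonic_pos (by omega)).ne'
  rw [harmonic_eq_inv_mul_harmonic_div_add p N hp] at hN ⊢
  set A := ∑ i ∈ Icc 1 N with ¬p ∣ i, (i : ℚ)⁻¹
  have hB : padicValRat p ((p : ℚ)⁻¹ * harmonic (N / p)) = padicValRat p (harmonic (N / p)) - 1 :=
    padicValRat.inv_self_mul hk
  by_cases hA : A = 0
  · rw [hA, add_zero, hB]
  have hAval : 0 ≤ padicValRat p A := padicValRat.sum_nonneg_of_nonneg
    (fun i hi => (padicValRat.inv_natCast_of_not_dvd (mem_filter.mp hi).2).ge) hA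
  rw [padicValRat.add_eq_of_lt hN (mul_ne_zero (by simpa using hp.ne') hk) hA (by omega), hB]

theorem padicValRat_harmonic_two_nonpos {p : ℕ} [Fact p.Prime] (hp3 : p ≠ 3) :
    padicValRat p (harmonic 2) ≤ 0 := by
  have h2 : harmonic 2 = 3 / 2 := by norm_num [harmonic_succ]
  rw [h2, padicValRat.div three_ne_zero two_ne_zero]
  have h3 : padicValRat p 3 = 0 := by
    rw [show (3 : ℚ) = (3 : ℕ) by norm_num, padicValRat.of_nat, padicValNat_primes hp3]
    rfl
  have : 0 ≤ padicValRat p 2 := by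
    rw [show (2 : ℚ) = (2 : ℕ) by norm_num, padicValRat.of_nat]; positivity
  omega

theorem vp_harmonic_pos_imp_three_p (p N : ℕ) (hp : p.Prime) (hp3 : p ≠ 3)
    (hpN : p ≤ N) (h : 0 < padicValRat p (H N)) : 3 * p ≤ N := by
  have := Fact.mk hp
  by_contra! hN
  have hk : N / p = 1 ∨ N / p = 2 := by
    have h1 : 1 ≤ N / p := (Nat.le_div_iff_mul_le hp.pos).mpr (by omega)
    have h3 : N / p < 3 := (Nat.div_lt_iff_lt_mul hp.pos).mpr (by omega)
    omega
  have hval : padicValRat p (harmonic (N / p)) ≤ 0 := by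
    rcases hk with hk | hk <;> rw [hk]
    · simp
    · exact padicValRat_harmonic_two_nonpos hp3
  rw [H_eq_harmonic, padicValRat_harmonic_eq_sub_one hpN hval] at h
  omega
end

section
/- For every prime p ≥ 5 and every positive integer N, we have pH_{pN} − H_N ≡ pN²H_{p−1} modulo p⁴ℤ_p. -/
/-!
Splitting `1, …, pN` into the blocks `qp + 1, …, qp + p` gives
`p H_{pN} - H_N = p ∑_{q<N} ∑_{r=1}^{p-1} 1/(qp + r)`, so it suffices to show that the double sum is
`≡ N² H_{p-1} (mod p³)`. Modulo `p³`, `1/(qp + r) = 1/r - qp/r² + q²p²/r³`, and pairing `r` with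
`p - r` gives `p ∑ 1/r² ≡ -2 H_{p-1}` and `p² ∑ 1/r³ ≡ 0`. Hence the `q`-th block is
`≡ (2q + 1) H_{p-1}`, and `∑_{q<N} (2q + 1) = N²`. The congruence is computed in `ZMod (p ^ 3)`
and carried to the `p`-adic norm through `ℤ_[p]` and `PadicInt.toZModPow`.
-/

open Finset

theorem Finset.sum_range_two_mul_add_one (N : ℕ) : ∑ q ∈ range N, (2 * q + 1) = N ^ 2 := by
  induction N with
  | zero => rfl
  | succ N ih => rw [sum_range_succ, ih]; ring

theorem ZMod.inv_add_eq_of_pow_three_eq_zero {n : ℕ} {x y w : ZMod n} (hxw : x * w = 1)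
    (hy : y ^ 3 = 0) : (x + y)⁻¹ = w - y * w ^ 2 + y ^ 2 * w ^ 3 :=
  ZMod.inv_eq_of_mul_eq_one _ _ _ <| by
    linear_combination (1 - y * w + y ^ 2 * w ^ 2) * hxw + w ^ 3 * hy

theorem Nat.not_dvd_mul_add_succ {p r : ℕ} (q : ℕ) (hr : r < p - 1) : ¬ p ∣ q * p + r + 1 :=
  (Nat.dvd_add_right (Nat.dvd_mul_left p q)).not.mpr
    (Nat.not_dvd_of_pos_of_lt r.succ_pos (by omega))

theorem ZMod.natCast_pow_self_pow_eq_zero (p n : ℕ) : (p : ZMod (p ^ n)) ^ n = 0 := by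
  exact_mod_cast ZMod.natCast_self (p ^ n)

theorem sq_mul_add_mul_pow_three {R : Type*} [CommRing R] {π : R} (hπ : π ^ 3 = 0) (x y : R) :
    π ^ 2 * (x + π * y) ^ 3 = π ^ 2 * x ^ 3 := by
  linear_combination (3 * x ^ 2 * y + 3 * π * x * y ^ 2 + π ^ 2 * y ^ 3) * hπ

def invSucc (p r : ℕ) : ZMod (p ^ 3) := ((r : ZMod (p ^ 3)) + 1)⁻¹

def invPowSum (p k : ℕ) : ZMod (p ^ 3) := ∑ r ∈ range (p - 1), invSucc p r ^ k

section PowerSums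

variable {p : ℕ} [Fact p.Prime]

theorem ZMod.natCast_mul_inv_of_not_dvd {m : ℕ} (hm : ¬ p ∣ m) (n : ℕ) :
    (m : ZMod (p ^ n)) * (m : ZMod (p ^ n))⁻¹ = 1 :=
  ZMod.coe_mul_inv_eq_one m <|
    ((Nat.Prime.coprime_iff_not_dvd Fact.out).mpr hm).symm.pow_right n

theorem succ_mul_invSucc {r : ℕ} (hr : r < p - 1) : ((r : ZMod (p ^ 3)) + 1) * invSucc p r = 1 := by
  rw [invSucc]
  exact_mod_cast ZMod.natCast_mul_inv_of_not_dvd (by simpa using Nat.not_dvd_mul_add_succ 0 hr) 3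

-- `p - 1 - 1 - r` is the index of `p - (r + 1)`, the partner of `r + 1` in `{1, …, p - 1}`.
theorem invSucc_reflect {r : ℕ} (hr : r < p - 1) :
    invSucc p (p - 1 - 1 - r) = -(invSucc p r + p * invSucc p r ^ 2 + p ^ 2 * invSucc p r ^ 3) := by
  have hcast : ((p - 1 - 1 - r : ℕ) : ZMod (p ^ 3)) + 1 = -((r : ZMod (p ^ 3)) + 1) + p := by
    rw [Nat.cast_sub (by omega), Nat.cast_sub (by omega), Nat.cast_sub (by omega)]
    ring
  rw [invSucc, hcast, ZMod.inv_add_eq_of_pow_three_eq_zero (w := -invSucc p r)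
    (by rw [neg_mul_neg, succ_mul_invSucc hr]) (ZMod.natCast_pow_self_pow_eq_zero p 3)]
  ring

theorem sum_invSucc_reflect (f : ZMod (p ^ 3) → ZMod (p ^ 3)) :
    ∑ r ∈ range (p - 1), f (invSucc p r) =
      ∑ r ∈ range (p - 1), f (-(invSucc p r + p * invSucc p r ^ 2 + p ^ 2 * invSucc p r ^ 3)) := by
  rw [← sum_range_reflect]
  exact sum_congr rfl fun r hr => by rw [invSucc_reflect (mem_range.mp hr)]

theorem sq_mul_invPowSum_three (hp2 : p ≠ 2) : (p : ZMod (p ^ 3)) ^ 2 * invPowSum p 3 = 0 := by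
  have hterm (w : ZMod (p ^ 3)) :
      (p : ZMod (p ^ 3)) ^ 2 * (-(w + (p : ZMod (p ^ 3)) * w ^ 2 + (p : ZMod (p ^ 3)) ^ 2 * w ^ 3)) ^ 3
        = -((p : ZMod (p ^ 3)) ^ 2 * w ^ 3) := by
    rw [show -(w + (p : ZMod (p ^ 3)) * w ^ 2 + (p : ZMod (p ^ 3)) ^ 2 * w ^ 3)
        = -w + p * -(w ^ 2 + p * w ^ 3) by ring,
      sq_mul_add_mul_pow_three (ZMod.natCast_pow_self_pow_eq_zero p 3)]
    ring
  have hneg : (p : ZMod (p ^ 3)) ^ 2 * invPowSum p 3 = -((p : ZMod (p ^ 3)) ^ 2 * invPowSum p 3) :=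
    calc (p : ZMod (p ^ 3)) ^ 2 * invPowSum p 3
        = ∑ r ∈ range (p - 1), (p : ZMod (p ^ 3)) ^ 2 * invSucc p r ^ 3 := mul_sum _ _ _
      _ = ∑ r ∈ range (p - 1), -((p : ZMod (p ^ 3)) ^ 2 * invSucc p r ^ 3) := by
        rw [sum_invSucc_reflect fun x => (p : ZMod (p ^ 3)) ^ 2 * x ^ 3]
        exact sum_congr rfl fun r _ => hterm _
      _ = -((p : ZMod (p ^ 3)) ^ 2 * invPowSum p 3) := by rw [invPowSum, mul_sum, sum_neg_distrib]
  have htwo : (2 : ZMod (p ^ 3)) * 2⁻¹ = 1 := by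
    exact_mod_cast ZMod.natCast_mul_inv_of_not_dvd
      ((Nat.prime_dvd_prime_iff_eq Fact.out Nat.prime_two).not.mpr hp2) 3
  linear_combination (-((p : ZMod (p ^ 3)) ^ 2 * invPowSum p 3)) * htwo + 2⁻¹ * hneg

theorem natCast_mul_invPowSum_two (hp2 : p ≠ 2) :
    (p : ZMod (p ^ 3)) * invPowSum p 2 = -2 * invPowSum p 1 := by
  have hrefl : invPowSum p 1 =
      -(invPowSum p 1 + p * invPowSum p 2 + p ^ 2 * invPowSum p 3) := by
    simpa only [invPowSum, pow_one, id, sum_neg_distrib, sum_add_distrib, mul_sum]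
      using sum_invSucc_reflect (p := p) id
  linear_combination hrefl - sq_mul_invPowSum_three hp2

theorem sum_inv_block (hp2 : p ≠ 2) (q : ℕ) :
    ∑ r ∈ range (p - 1), ((q : ZMod (p ^ 3)) * p + r + 1)⁻¹ = (2 * q + 1) * invPowSum p 1 := by
  have hqp : ((q : ZMod (p ^ 3)) * p) ^ 3 = 0 := by
    rw [mul_pow, ZMod.natCast_pow_self_pow_eq_zero, mul_zero]
  calc ∑ r ∈ range (p - 1), ((q : ZMod (p ^ 3)) * p + r + 1)⁻¹
      = ∑ r ∈ range (p - 1),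
          (invSucc p r - q * p * invSucc p r ^ 2 + q ^ 2 * p ^ 2 * invSucc p r ^ 3) :=
        sum_congr rfl fun r hr => by
          rw [add_assoc, add_comm, ZMod.inv_add_eq_of_pow_three_eq_zero
            (succ_mul_invSucc (mem_range.mp hr)) hqp]
          ring
    _ = invPowSum p 1 - q * (p * invPowSum p 2) + q ^ 2 * (p ^ 2 * invPowSum p 3) := by
        simp only [invPowSum, pow_one, sum_add_distrib, sum_sub_distrib, mul_sum]
        ring_nf
    _ = (2 * q + 1) * invPowSum p 1 := by
        rw [natCast_mul_invPowSum_two hp2, sq_mul_invPowSum_three hp2]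
        ring

theorem sum_sum_inv_blocks (hp2 : p ≠ 2) (N : ℕ) :
    ∑ q ∈ range N, ∑ r ∈ range (p - 1), ((q : ZMod (p ^ 3)) * p + r + 1)⁻¹ =
      N ^ 2 * invPowSum p 1 := by
  rw [sum_congr rfl fun q _ => sum_inv_block hp2 q, ← sum_mul]
  exact_mod_cast congrArg (fun n : ℕ => (n : ZMod (p ^ 3)) * invPowSum p 1)
    (Finset.sum_range_two_mul_add_one N)

end PowerSums

section Padic

variable {p : ℕ} [Fact p.Prime]

theorem PadicInt.natCast_mul_inv {m : ℕ} (hm : ¬ p ∣ m) : (m : ℤ_[p]) * (m : ℤ_[p]).inv = 1 :=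
  PadicInt.mul_inv <| PadicInt.norm_natCast_eq_one_iff.mpr <|
    (Nat.Prime.coprime_iff_not_dvd Fact.out).mpr hm

theorem PadicInt.coe_inv_natCast {m : ℕ} (hm : ¬ p ∣ m) :
    (((m : ℤ_[p]).inv : ℤ_[p]) : ℚ_[p]) = (m : ℚ_[p])⁻¹ :=
  eq_inv_of_mul_eq_one_right <| by
    exact_mod_cast congrArg ((↑) : ℤ_[p] → ℚ_[p]) (natCast_mul_inv hm)

theorem PadicInt.toZModPow_inv_natCast {m : ℕ} (hm : ¬ p ∣ m) (n : ℕ) :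
    toZModPow n (m : ℤ_[p]).inv = (m : ZMod (p ^ n))⁻¹ :=
  (ZMod.inv_eq_of_mul_eq_one _ _ _ <| by
    simpa using congrArg (toZModPow n) (natCast_mul_inv hm)).symm

theorem padicNorm_le_of_toZModPow_eq_zero {x : ℚ} {y : ℤ_[p]} (hxy : (y : ℚ_[p]) = x) {n : ℕ}
    (hy : PadicInt.toZModPow n y = 0) : padicNorm p x ≤ (p : ℚ) ^ (-n : ℤ) := by
  have hmem : y ∈ Ideal.span {(p : ℤ_[p]) ^ n} := by
    rwa [← PadicInt.ker_toZModPow, RingHom.mem_ker]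
  have hnorm := (PadicInt.norm_le_pow_iff_mem_span_pow y n).mpr hmem
  rw [PadicInt.norm_def, hxy, Padic.eq_padicNorm] at hnorm
  rw [← Rat.cast_le (K := ℝ)]
  push_cast
  exact hnorm

theorem padicNorm_sum_blocks_sub_le (hp2 : p ≠ 2) (N : ℕ) :
    padicNorm p (∑ q ∈ range N, ∑ r ∈ range (p - 1), (1 : ℚ) / (q * p + r + 1) - N ^ 2 * H (p - 1))
      ≤ (p : ℚ) ^ (-3 : ℤ) := by
  have hblock : ∀ q, ∀ r ∈ range (p - 1), ¬ p ∣ q * p + r + 1 :=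
    fun q r hr => Nat.not_dvd_mul_add_succ q (mem_range.mp hr)
  have hsucc : ∀ r ∈ range (p - 1), ¬ p ∣ r + 1 := fun r hr => by simpa using hblock 0 r hr
  refine padicNorm_le_of_toZModPow_eq_zero (n := 3) (y :=
    ∑ q ∈ range N, ∑ r ∈ range (p - 1), ((q * p + r + 1 : ℕ) : ℤ_[p]).inv
      - (N : ℤ_[p]) ^ 2 * ∑ r ∈ range (p - 1), ((r + 1 : ℕ) : ℤ_[p]).inv) ?_ ?_
  · simp only [PadicInt.coe_sub, PadicInt.coe_mul, PadicInt.coe_pow, PadicInt.coe_sum,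
      PadicInt.coe_natCast]
    rw [sum_congr rfl fun q _ => sum_congr rfl fun r hr => PadicInt.coe_inv_natCast (hblock q r hr),
      sum_congr rfl fun r hr => PadicInt.coe_inv_natCast (hsucc r hr)]
    simp only [H, one_div]
    push_cast
    rfl
  · simp only [map_sub, map_mul, map_pow, map_natCast, map_sum]
    rw [sum_congr rfl fun q _ => sum_congr rfl fun r hr =>
        PadicInt.toZModPow_inv_natCast (hblock q r hr) 3,
      sum_congr rfl fun r hr => PadicInt.toZModPow_inv_natCast (hsucc r hr) 3]
    push_cast
    rw [sum_sum_inv_blocks hp2, invPowSum]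
    simp only [invSucc, pow_one, sub_self]

end Padic

theorem H_succ (n : ℕ) : H (n + 1) = H n + 1 / (n + 1) := by
  simp [H, sum_range_succ]

theorem H_mul_succ {p : ℕ} (hp : 0 < p) (N : ℕ) :
    H (p * (N + 1)) =
      H (p * N) + ∑ r ∈ range (p - 1), (1 : ℚ) / (N * p + r + 1) + 1 / (p * (N + 1)) := by
  obtain ⟨k, rfl⟩ : ∃ k, p = k + 1 := ⟨p - 1, by omega⟩
  simp only [H, mul_add_one, sum_range_add, sum_range_succ, Nat.add_sub_cancel]
  push_cast
  ring_nf

theorem natCast_mul_H_mul_sub_H {p : ℕ} (hp : 0 < p) (N : ℕ) :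
    (p : ℚ) * H (p * N) - H N =
      p * ∑ q ∈ range N, ∑ r ∈ range (p - 1), (1 : ℚ) / (q * p + r + 1) := by
  induction N with
  | zero => simp [H]
  | succ N ih =>
    have hp0 : (p : ℚ) ≠ 0 := by positivity
    have hlast : (p : ℚ) * (1 / (p * (N + 1))) = 1 / (N + 1) := by field_simp
    rw [H_mul_succ hp, H_succ, sum_range_succ]
    linear_combination ih + hlast

theorem p_mul_harmonic_sub_congr_general (p N : ℕ) (hp : p.Prime) (hp5 : 5 ≤ p) :
    padicNorm p ((p : ℚ) * H (p * N) - H N - (p : ℚ) * (N : ℚ) ^ 2 * H (p - 1))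
      ≤ (p : ℚ) ^ (-4 : ℤ) := by
  have : Fact p.Prime := ⟨hp⟩
  have hp2 : p ≠ 2 := by omega
  rw [show (p : ℚ) * H (p * N) - H N - (p : ℚ) * (N : ℚ) ^ 2 * H (p - 1) =
      p * (∑ q ∈ range N, ∑ r ∈ range (p - 1), (1 : ℚ) / (q * p + r + 1) - N ^ 2 * H (p - 1)) by
    rw [mul_sub, ← natCast_mul_H_mul_sub_H hp.pos]; ring,
    padicNorm.mul, padicNorm.padicNorm_p_of_prime]
  calc (p : ℚ)⁻¹ * padicNorm p _ ≤ (p : ℚ)⁻¹ * (p : ℚ) ^ (-3 : ℤ) := by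
        gcongr
        exact padicNorm_sum_blocks_sub_le hp2 N
    _ = (p : ℚ) ^ (-4 : ℤ) := by
        rw [← zpow_neg_one, ← zpow_add₀ (by exact_mod_cast hp.ne_zero)]
        norm_num

theorem p_mul_harmonic_sub_congr (p N : ℕ) (hp : p.Prime) (hp5 : 5 ≤ p) (hN : 1 ≤ N) :
    padicNorm p ((p : ℚ) * H (p * N) - H N - (p : ℚ) * (N : ℚ) ^ 2 * H (p - 1))
      ≤ (p : ℚ) ^ (-4 : ℤ) :=
  p_mul_harmonic_sub_congr_general p N hp hp5
end
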